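/- arXiv:2310.03977 — 2 statements merged into one kernel-verified Lean document; each statement's English description precedes it below -/
import Mathlib

section
/- Let u₀, u₁ ∈ ℝᵐ with ‖u₀‖ = ‖u₁‖ = 1, and let μ be a random vector in ℝᵐ with ‖μ(ω)‖ ≤ 1 almost surely and ⟨u₁, E[μ]⟩ ≥ 0. Then log E[exp(⟨u₁, μ⟩)] − log E[exp(⟨u₀, μ⟩)] ≤ ‖u₁ − u₀‖ + e·(E‖μ‖² − ‖E[μ]‖²), where e = exp(1). -/
open MeasureTheory

/-- Inequality of step (d) in the proof of Theorem 3.2: replacing the anchor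
embedding `u₀` by its augmented view `u₁` changes the log-mean-exp of similarities
to the random class center `μ` by at most `‖u₁ − u₀‖ + e·(E‖μ‖² − ‖Eμ‖²)`. -/
theorem log_mean_exp_shift_bound
    {m : ℕ} (u₀ u₁ : EuclideanSpace ℝ (Fin m))
    (hu₀ : ‖u₀‖ = 1) (hu₁ : ‖u₁‖ = 1)
    {Ω : Type*} [MeasurableSpace Ω] (P : Measure Ω) [IsProbabilityMeasure P]
    (μ : Ω → EuclideanSpace ℝ (Fin m))
    (hμm : AEStronglyMeasurable μ P)
    (hμn : ∀ᵐ ω ∂P, ‖μ ω‖ ≤ 1)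
    (hpos : (inner ℝ u₁ (∫ ω, μ ω ∂P) : ℝ) ≥ 0) :
    Real.log (∫ ω, Real.exp (inner ℝ u₁ (μ ω) : ℝ) ∂P) -
      Real.log (∫ ω, Real.exp (inner ℝ u₀ (μ ω) : ℝ) ∂P) ≤
      ‖u₁ - u₀‖ + Real.exp 1 * ((∫ ω, ‖μ ω‖ ^ 2 ∂P) - ‖∫ ω, μ ω ∂P‖ ^ 2) := by
  set d := ‖u₁ - u₀‖ with hd
  have hmeas : ∀ u : EuclideanSpace ℝ (Fin m),
      AEStronglyMeasurable (fun ω => Real.exp (inner ℝ u (μ ω) : ℝ)) P := by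
    intro u
    exact (Real.continuous_exp.comp (continuous_const.inner continuous_id)).comp_aestronglyMeasurable hμm
  have habs : ∀ u : EuclideanSpace ℝ (Fin m), ‖u‖ = 1 →
      ∀ᵐ ω ∂P, |(inner ℝ u (μ ω) : ℝ)| ≤ 1 := by
    intro u hu
    filter_upwards [hμn] with ω hω
    calc |(inner ℝ u (μ ω) : ℝ)| ≤ ‖u‖ * ‖μ ω‖ := abs_real_inner_le_norm _ _
      _ ≤ 1 := by rw [hu]; linarith
  have hint : ∀ u : EuclideanSpace ℝ (Fin m), ‖u‖ = 1 →
      Integrable (fun ω => Real.exp (inner ℝ u (μ ω) : ℝ)) P := by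
    intro u hu
    refine Integrable.mono' (integrable_const (Real.exp 1)) (hmeas u) ?_
    filter_upwards [habs u hu] with ω hω
    rw [Real.norm_eq_abs, abs_of_pos (Real.exp_pos _)]
    exact Real.exp_le_exp.mpr (le_of_abs_le hω)
  have hI0pos : 0 < ∫ ω, Real.exp (inner ℝ u₀ (μ ω) : ℝ) ∂P := by
    have h1 : ∫ ω, Real.exp (-1 : ℝ) ∂P ≤ ∫ ω, Real.exp (inner ℝ u₀ (μ ω) : ℝ) ∂P := by
      refine integral_mono_ae (integrable_const _) (hint u₀ hu₀) ?_
      filter_upwards [habs u₀ hu₀] with ω hω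
      exact Real.exp_le_exp.mpr (neg_le_of_abs_le hω)
    have h2 : ∫ ω, Real.exp (-1 : ℝ) ∂P = Real.exp (-1) := by
      simp [integral_const]
    calc (0:ℝ) < Real.exp (-1) := Real.exp_pos _
      _ ≤ _ := h2 ▸ h1
  have hI1pos : 0 < ∫ ω, Real.exp (inner ℝ u₁ (μ ω) : ℝ) ∂P := by
    have h1 : ∫ ω, Real.exp (-1 : ℝ) ∂P ≤ ∫ ω, Real.exp (inner ℝ u₁ (μ ω) : ℝ) ∂P := by
      refine integral_mono_ae (integrable_const _) (hint u₁ hu₁) ?_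
      filter_upwards [habs u₁ hu₁] with ω hω
      exact Real.exp_le_exp.mpr (neg_le_of_abs_le hω)
    have h2 : ∫ ω, Real.exp (-1 : ℝ) ∂P = Real.exp (-1) := by
      simp [integral_const]
    calc (0:ℝ) < Real.exp (-1) := Real.exp_pos _
      _ ≤ _ := h2 ▸ h1
  -- main bound: I₁ ≤ exp d * I₀
  have hmain : ∫ ω, Real.exp (inner ℝ u₁ (μ ω) : ℝ) ∂P ≤
      Real.exp d * ∫ ω, Real.exp (inner ℝ u₀ (μ ω) : ℝ) ∂P := by
    rw [← integral_const_mul]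
    refine integral_mono_ae (hint u₁ hu₁) ((hint u₀ hu₀).const_mul _) ?_
    filter_upwards [hμn] with ω hω
    rw [← Real.exp_add]
    refine Real.exp_le_exp.mpr ?_
    have : (inner ℝ u₁ (μ ω) : ℝ) - inner ℝ u₀ (μ ω) = inner ℝ (u₁ - u₀) (μ ω) := by
      rw [inner_sub_left]
    have hle : (inner ℝ (u₁ - u₀) (μ ω) : ℝ) ≤ d := by
      calc (inner ℝ (u₁ - u₀) (μ ω) : ℝ) ≤ ‖u₁ - u₀‖ * ‖μ ω‖ := real_inner_le_norm _ _
        _ ≤ d * 1 := by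
            exact mul_le_mul_of_nonneg_left hω (norm_nonneg _)
        _ = d := mul_one _
    linarith
  have hlog : Real.log (∫ ω, Real.exp (inner ℝ u₁ (μ ω) : ℝ) ∂P) -
      Real.log (∫ ω, Real.exp (inner ℝ u₀ (μ ω) : ℝ) ∂P) ≤ d := by
    have := Real.log_le_log hI1pos hmain
    rw [Real.log_mul (Real.exp_ne_zero _) (ne_of_gt hI0pos), Real.log_exp] at this
    linarith
  -- variance nonnegativity
  have hvar : ‖∫ ω, μ ω ∂P‖ ^ 2 ≤ ∫ ω, ‖μ ω‖ ^ 2 ∂P := by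
    have hX : MemLp (fun ω => ‖μ ω‖) 2 P := by
      refine MemLp.of_bound hμm.norm 1 ?_
      filter_upwards [hμn] with ω hω
      simpa using hω
    have hv := ProbabilityTheory.variance_nonneg (fun ω => ‖μ ω‖) P
    rw [ProbabilityTheory.variance_eq_sub hX] at hv
    have h1 : ‖∫ ω, μ ω ∂P‖ ≤ ∫ ω, ‖μ ω‖ ∂P := norm_integral_le_integral_norm _
    have h2 : ‖∫ ω, μ ω ∂P‖ ^ 2 ≤ (∫ ω, ‖μ ω‖ ∂P) ^ 2 := by
      exact pow_le_pow_left₀ (norm_nonneg _) h1 2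
    simp only [Pi.pow_apply] at hv
    linarith
  have hepos : (0:ℝ) < Real.exp 1 := Real.exp_pos _
  nlinarith [hlog]
end

section
/- Let V be a metric space, E a real inner product space, and f : V → E an L-Lipschitz map (L ≥ 0). Let K be a positive integer, w₁,…,w_K ≥ 0 class weights with Σₖ wₖ = 1, and for each class k let Pₖ be a probability measure on V such that f is Bochner-integrable with respect to each Pₖ, and let v*ₖ ∈ V be a chosen point. Define μₖ = ∫ f dPₖ and μ = Σₖ wₖ μₖ, and set ε₁² = Σₖ wₖ ∫ d(v, v*ₖ)² dPₖ(v) and ε₂² = Σₖ wₖ Σₗ wₗ ∫ d(v, v*ₖ)² dPₗ(v). Assume these second moments are finite. Then Σₖ wₖ ‖μₖ − μ‖² ≤ L²·(ε₁ + ε₂)². -/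
open MeasureTheory

open ProbabilityTheory in
/-- Jensen/Cauchy–Schwarz: for a probability measure, `(∫ g)² ≤ ∫ g²`. -/
lemma sq_integral_le_aux {Ω : Type*} [MeasurableSpace Ω] (μ : Measure Ω) [IsProbabilityMeasure μ]
    {g : Ω → ℝ} (hg : AEStronglyMeasurable g μ) (hg2 : Integrable (fun ω => g ω ^ 2) μ) :
    (∫ ω, g ω ∂μ) ^ 2 ≤ ∫ ω, g ω ^ 2 ∂μ := by
  have hm : MemLp g 2 μ := (memLp_two_iff_integrable_sq hg).2 hg2
  have h := variance_nonneg g μ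
  rw [variance_eq_sub hm] at h
  simp only [Pi.pow_apply] at h
  linarith

lemma dist_aesm_aux {V : Type*} [MetricSpace V] [MeasurableSpace V]
    (P : Measure V) (v0 : V)
    (h2 : Integrable (fun v => dist v v0 ^ 2) P) :
    AEStronglyMeasurable (fun v => dist v v0) P := by
  have heq : (fun v : V => dist v v0) = fun v => Real.sqrt (dist v v0 ^ 2) := by
    ext v; rw [Real.sqrt_sq dist_nonneg]
  rw [heq]
  exact Real.continuous_sqrt.comp_aestronglyMeasurable h2.aestronglyMeasurable

lemma dist_integrable_aux {V : Type*} [MetricSpace V] [MeasurableSpace V]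
    (P : Measure V) [IsProbabilityMeasure P] (v0 : V)
    (h2 : Integrable (fun v => dist v v0 ^ 2) P) :
    Integrable (fun v => dist v v0) P := by
  refine Integrable.mono' (g := fun v => 1 + dist v v0 ^ 2)
    ((integrable_const 1).add h2) (dist_aesm_aux P v0 h2) ?_
  filter_upwards with v
  rw [Real.norm_eq_abs, abs_of_nonneg dist_nonneg]
  nlinarith [dist_nonneg (x := v) (y := v0)]

lemma center_dist_le_aux {V : Type*} [MetricSpace V] [MeasurableSpace V]
    {E : Type*} [NormedAddCommGroup E] [NormedSpace ℝ E] [CompleteSpace E]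
    (f : V → E) (L : ℝ)
    (hf : ∀ x y, dist (f x) (f y) ≤ L * dist x y)
    (P : Measure V) [IsProbabilityMeasure P]
    (hfint : Integrable f P) (v0 : V)
    (hd : Integrable (fun v => dist v v0) P) :
    ‖(∫ v, f v ∂P) - f v0‖ ≤ L * ∫ v, dist v v0 ∂P := by
  have h1 : (∫ v, f v ∂P) - f v0 = ∫ v, (f v - f v0) ∂P := by
    rw [integral_sub hfint (integrable_const _), integral_const]
    simp
  rw [h1]
  calc ‖∫ v, (f v - f v0) ∂P‖ ≤ ∫ v, ‖f v - f v0‖ ∂P := norm_integral_le_integral_norm _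
    _ ≤ ∫ v, L * dist v v0 ∂P := by
        refine integral_mono (hfint.sub (integrable_const _)).norm (hd.const_mul L) ?_
        intro v
        simpa [dist_eq_norm] using hf v v0
    _ = L * ∫ v, dist v v0 ∂P := integral_const_mul _ _

/-- Bound `Var(μ_y) ≤ L²(ε₁ + ε₂)²` from Appendix A.3 (proof of Corollary 3.2):
the variance of the class centers `μₖ = ∫ f dPₖ` around the global mean
`μ = Σₖ wₖ μₖ` is controlled by the Lipschitz constant of the encoder and the
intrinsic quantities `ε₁`, `ε₂`. -/
theorem class_center_variance_bound
    {V : Type*} [MetricSpace V] [MeasurableSpace V]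
    {E : Type*} [NormedAddCommGroup E] [InnerProductSpace ℝ E]
    (f : V → E) (L : ℝ) (hL : 0 ≤ L)
    (hf : ∀ x y, dist (f x) (f y) ≤ L * dist x y)
    (K : ℕ) (hK : 0 < K)
    (w : Fin K → ℝ) (hw : ∀ k, 0 ≤ w k) (hw1 : ∑ k, w k = 1)
    (P : Fin K → Measure V) [∀ k, IsProbabilityMeasure (P k)]
    (hfint : ∀ k, Integrable f (P k))
    (vstar : Fin K → V)
    (hmom : ∀ k l, Integrable (fun v => dist v (vstar k) ^ 2) (P l))
    (μ : E) (hμ : μ = ∑ k, w k • ∫ v, f v ∂P k)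
    (ε₁ ε₂ : ℝ) (hε₁ : 0 ≤ ε₁) (hε₂ : 0 ≤ ε₂)
    (hε₁sq : ε₁ ^ 2 = ∑ k, w k * ∫ v, dist v (vstar k) ^ 2 ∂P k)
    (hε₂sq : ε₂ ^ 2 = ∑ k, w k * ∑ l, w l * ∫ v, dist v (vstar k) ^ 2 ∂P l) :
    ∑ k, w k * ‖(∫ v, f v ∂P k) - μ‖ ^ 2 ≤ L ^ 2 * (ε₁ + ε₂) ^ 2 := by
  by_cases hc : CompleteSpace E
  swap
  · have h0 : ∀ k : Fin K, (∫ v, f v ∂P k) = (0 : E) := fun k => by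
      simp [MeasureTheory.integral, hc]
    have hμ0 : μ = 0 := by simp [hμ, h0]
    simp only [hμ0, h0]
    simp only [sub_zero, norm_zero]
    have : (0:ℝ) ≤ L ^ 2 * (ε₁ + ε₂) ^ 2 := by positivity
    simpa using this
  · -- main case
    set μk : Fin K → E := fun k => ∫ v, f v ∂P k with hμk
    set c : Fin K → Fin K → ℝ := fun k l => ∫ v, dist v (vstar k) ^ 2 ∂P l with hc'
    have hc0 : ∀ k l, 0 ≤ c k l := fun k l =>
      integral_nonneg fun v => sq_nonneg _
    set s : Fin K → ℝ := fun k => Real.sqrt (c k k) with hs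
    set t : Fin K → ℝ := fun k => ∑ l, w l * Real.sqrt (c k l) with ht
    have hs0 : ∀ k, 0 ≤ s k := fun k => Real.sqrt_nonneg _
    have ht0 : ∀ k, 0 ≤ t k := fun k =>
      Finset.sum_nonneg fun l _ => mul_nonneg (hw l) (Real.sqrt_nonneg _)
    -- first moment bounded by sqrt of second moment
    have hI : ∀ k l, (∫ v, dist v (vstar k) ∂P l) ≤ Real.sqrt (c k l) := by
      intro k l
      have h1 := sq_integral_le_aux (P l) (dist_aesm_aux (P l) (vstar k) (hmom k l)) (hmom k l)
      have h2 : 0 ≤ ∫ v, dist v (vstar k) ∂P l :=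
        integral_nonneg fun v => dist_nonneg
      calc (∫ v, dist v (vstar k) ∂P l) = Real.sqrt ((∫ v, dist v (vstar k) ∂P l) ^ 2) :=
            (Real.sqrt_sq h2).symm
        _ ≤ Real.sqrt (c k l) := Real.sqrt_le_sqrt h1
    -- pairwise center bound
    have hpair : ∀ k l, ‖μk k - μk l‖ ≤ L * (s k + Real.sqrt (c k l)) := by
      intro k l
      have hkk := center_dist_le_aux f L hf (P k) (hfint k) (vstar k)
        (dist_integrable_aux (P k) (vstar k) (hmom k k))
      have hkl := center_dist_le_aux f L hf (P l) (hfint l) (vstar k)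
        (dist_integrable_aux (P l) (vstar k) (hmom k l))
      have htri : ‖μk k - μk l‖ ≤ ‖μk k - f (vstar k)‖ + ‖f (vstar k) - μk l‖ := by
        have := norm_sub_le (μk k - f (vstar k)) (μk l - f (vstar k))
        simpa [norm_sub_rev, sub_sub_sub_cancel_right] using this
      have h2 : ‖f (vstar k) - μk l‖ ≤ L * ∫ v, dist v (vstar k) ∂P l := by
        rw [norm_sub_rev]; exact hkl
      have hIk := hI k k
      have hIl := hI k l
      have hLk : L * (∫ v, dist v (vstar k) ∂P k) ≤ L * s k := by
        exact mul_le_mul_of_nonneg_left hIk hL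
      have hLl : L * (∫ v, dist v (vstar k) ∂P l) ≤ L * Real.sqrt (c k l) := by
        exact mul_le_mul_of_nonneg_left hIl hL
      calc ‖μk k - μk l‖ ≤ ‖μk k - f (vstar k)‖ + ‖f (vstar k) - μk l‖ := htri
        _ ≤ L * (∫ v, dist v (vstar k) ∂P k) + L * (∫ v, dist v (vstar k) ∂P l) :=
            add_le_add hkk h2
        _ ≤ L * s k + L * Real.sqrt (c k l) := add_le_add hLk hLl
        _ = L * (s k + Real.sqrt (c k l)) := by ring
    -- center-to-mean bound
    have hcm : ∀ k, ‖μk k - μ‖ ≤ L * (s k + t k) := by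
      intro k
      have hdecomp : μk k - μ = ∑ l, w l • (μk k - μk l) := by
        rw [hμ]
        rw [Finset.sum_congr rfl (fun l _ => smul_sub (w l) (μk k) (μk l))]
        rw [Finset.sum_sub_distrib, ← Finset.sum_smul, hw1, one_smul]
      rw [hdecomp]
      calc ‖∑ l, w l • (μk k - μk l)‖ ≤ ∑ l, ‖w l • (μk k - μk l)‖ :=
            norm_sum_le _ _
        _ ≤ ∑ l, w l * (L * (s k + Real.sqrt (c k l))) := by
            refine Finset.sum_le_sum fun l _ => ?_
            rw [norm_smul, Real.norm_eq_abs, abs_of_nonneg (hw l)]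
            exact mul_le_mul_of_nonneg_left (hpair k l) (hw l)
        _ = L * (s k + t k) := by
            have he : ∀ l : Fin K, w l * (L * (s k + Real.sqrt (c k l)))
                = L * s k * w l + L * (w l * Real.sqrt (c k l)) := fun l => by ring
            rw [Finset.sum_congr rfl fun l _ => he l, Finset.sum_add_distrib,
              ← Finset.mul_sum, ← Finset.mul_sum, hw1]
            simp only [ht]
            ring
    -- sum bounds
    have hsum1 : ∑ k, w k * s k ^ 2 = ε₁ ^ 2 := by
      rw [hε₁sq]
      refine Finset.sum_congr rfl fun k _ => ?_
      rw [hs, Real.sq_sqrt (hc0 k k)]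
    have hsum2 : ∑ k, w k * t k ^ 2 ≤ ε₂ ^ 2 := by
      rw [hε₂sq]
      refine Finset.sum_le_sum fun k _ => ?_
      refine mul_le_mul_of_nonneg_left ?_ (hw k)
      -- (Σ wₗ √cₖₗ)² ≤ Σ wₗ cₖₗ
      have hCS := Finset.sum_mul_sq_le_sq_mul_sq Finset.univ
        (fun l => Real.sqrt (w l)) (fun l => Real.sqrt (w l) * Real.sqrt (c k l))
      have he1 : ∀ l : Fin K, Real.sqrt (w l) * (Real.sqrt (w l) * Real.sqrt (c k l))
          = w l * Real.sqrt (c k l) := by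
        intro l; rw [← mul_assoc, Real.mul_self_sqrt (hw l)]
      have he2 : ∀ l : Fin K, Real.sqrt (w l) ^ 2 = w l := fun l => Real.sq_sqrt (hw l)
      have he3 : ∀ l : Fin K, (Real.sqrt (w l) * Real.sqrt (c k l)) ^ 2 = w l * c k l := by
        intro l; rw [mul_pow, Real.sq_sqrt (hw l), Real.sq_sqrt (hc0 k l)]
      simp only [he1, he2, he3, hw1, one_mul] at hCS
      calc (t k) ^ 2 ≤ ∑ l, w l * c k l := hCS
        _ = ∑ l, w l * ∫ v, dist v (vstar k) ^ 2 ∂P l := rfl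
    have hst : ∑ k, w k * (s k * t k) ≤ ε₁ * ε₂ := by
      have hCS := Finset.sum_mul_sq_le_sq_mul_sq Finset.univ
        (fun k => Real.sqrt (w k) * s k) (fun k => Real.sqrt (w k) * t k)
      have he1 : ∀ k : Fin K, (Real.sqrt (w k) * s k) * (Real.sqrt (w k) * t k)
          = w k * (s k * t k) := by
        intro k
        rw [show (Real.sqrt (w k) * s k) * (Real.sqrt (w k) * t k)
          = (Real.sqrt (w k) * Real.sqrt (w k)) * (s k * t k) by ring,
          Real.mul_self_sqrt (hw k)]
      have he2 : ∀ k : Fin K, (Real.sqrt (w k) * s k) ^ 2 = w k * s k ^ 2 := by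
        intro k; rw [mul_pow, Real.sq_sqrt (hw k)]
      have he3 : ∀ k : Fin K, (Real.sqrt (w k) * t k) ^ 2 = w k * t k ^ 2 := by
        intro k; rw [mul_pow, Real.sq_sqrt (hw k)]
      simp only [he1, he2, he3] at hCS
      have hb : (∑ k, w k * (s k * t k)) ^ 2 ≤ (ε₁ * ε₂) ^ 2 := by
        calc (∑ k, w k * (s k * t k)) ^ 2 ≤ (∑ k, w k * s k ^ 2) * ∑ k, w k * t k ^ 2 := hCS
          _ ≤ ε₁ ^ 2 * ε₂ ^ 2 := by
              refine mul_le_mul (le_of_eq hsum1) hsum2 ?_ (sq_nonneg _)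
              exact Finset.sum_nonneg fun k _ => mul_nonneg (hw k) (sq_nonneg _)
          _ = (ε₁ * ε₂) ^ 2 := by ring
      have hnn : 0 ≤ ∑ k, w k * (s k * t k) :=
        Finset.sum_nonneg fun k _ => mul_nonneg (hw k) (mul_nonneg (hs0 k) (ht0 k))
      nlinarith [mul_nonneg hε₁ hε₂]
    -- combine
    have hmain : ∑ k, w k * (s k + t k) ^ 2 ≤ (ε₁ + ε₂) ^ 2 := by
      have hexp : ∑ k, w k * (s k + t k) ^ 2
          = (∑ k, w k * s k ^ 2) + 2 * (∑ k, w k * (s k * t k)) + ∑ k, w k * t k ^ 2 := by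
        rw [Finset.mul_sum, ← Finset.sum_add_distrib, ← Finset.sum_add_distrib]
        refine Finset.sum_congr rfl fun k _ => ?_
        ring
      rw [hexp]
      have : (ε₁ + ε₂) ^ 2 = ε₁ ^ 2 + 2 * (ε₁ * ε₂) + ε₂ ^ 2 := by ring
      rw [this]
      linarith [hsum1, hst, hsum2]
    calc ∑ k, w k * ‖μk k - μ‖ ^ 2 ≤ ∑ k, w k * (L * (s k + t k)) ^ 2 := by
          refine Finset.sum_le_sum fun k _ => ?_
          refine mul_le_mul_of_nonneg_left ?_ (hw k)
          have h1 := hcm k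
          have h2 : 0 ≤ ‖μk k - μ‖ := norm_nonneg _
          nlinarith
      _ = L ^ 2 * ∑ k, w k * (s k + t k) ^ 2 := by
          rw [Finset.mul_sum]; refine Finset.sum_congr rfl fun k _ => ?_; ring
      _ ≤ L ^ 2 * (ε₁ + ε₂) ^ 2 := by
          exact mul_le_mul_of_nonneg_left hmain (sq_nonneg L)
end
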